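/- arXiv:2005.02897 — 4 statements merged into one kernel-verified Lean document; each statement's English description precedes it below -/
import Mathlib

section
/- Let B be a contraction on ℂⁿ, α a unitary n×n matrix, e, f ∈ ℂⁿ with B e = α* e and B f = f (where B acts isometrically on e, being equal to α* e with ‖α* e‖ = ‖e‖). Then f is orthogonal to (I − α*) e. -/
/-! A contraction `T` fixing `f` has its adjoint fixing `f` as well, because
`‖T† f - f‖² = ‖T† f‖² - ‖f‖² ≤ 0`. Hence `⟪x - T x, f⟫ = ⟪x, f - T† f⟫ = 0` for every `x`,
and `(I - α*) e = e - B e` is of this form. -/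

open scoped Matrix.Norms.L2Operator Matrix

namespace ContinuousLinearMap

variable {𝕜 E : Type*} [RCLike 𝕜] [NormedAddCommGroup E] [InnerProductSpace 𝕜 E] [CompleteSpace E]
  {T : E →L[𝕜] E} {f : E}

theorem adjoint_apply_eq_self_of_norm_le_one (hT : ‖T‖ ≤ 1) (hf : T f = f) : adjoint T f = f := by
  have hnorm : ‖adjoint T f‖ ≤ ‖f‖ := by
    simpa using (adjoint T).le_of_opNorm_le ((adjoint.norm_map T).trans_le hT) f
  have hinner : RCLike.re (inner 𝕜 (adjoint T f) f) = ‖f‖ ^ 2 := by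
    rw [adjoint_inner_left, hf, inner_self_eq_norm_sq]
  have hsq : ‖adjoint T f - f‖ ^ 2 ≤ 0 := by
    rw [norm_sub_sq (𝕜 := 𝕜), hinner]
    nlinarith [norm_nonneg (adjoint T f)]
  exact sub_eq_zero.mp (norm_eq_zero.mp ((sq_nonpos_iff _).mp hsq))

theorem inner_sub_apply_eq_zero_of_norm_le_one (hT : ‖T‖ ≤ 1) (hf : T f = f) (x : E) :
    inner 𝕜 (x - T x) f = 0 := by
  rw [inner_sub_left, ← adjoint_inner_right, adjoint_apply_eq_self_of_norm_le_one hT hf, sub_self]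

end ContinuousLinearMap

theorem orthogonal_of_fixed_vectors {n : ℕ}
    (B : Matrix (Fin n) (Fin n) ℂ) (hB : ‖B‖ ≤ 1)
    (α : Matrix.unitaryGroup (Fin n) ℂ)
    (e f : EuclideanSpace ℂ (Fin n))
    (he : Matrix.toEuclideanLin B e = Matrix.toEuclideanLin ((α : Matrix (Fin n) (Fin n) ℂ)ᴴ) e)
    (hf : Matrix.toEuclideanLin B f = f) :
    inner ℂ (Matrix.toEuclideanLin ((1 : Matrix (Fin n) (Fin n) ℂ) - (α : Matrix (Fin n) (Fin n) ℂ)ᴴ) e) f = (0 : ℂ) := by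
  have hsub : Matrix.toEuclideanLin ((1 : Matrix (Fin n) (Fin n) ℂ) - (α : Matrix (Fin n) (Fin n) ℂ)ᴴ) e
      = e - Matrix.toEuclideanCLM (𝕜 := ℂ) B e := by
    change Matrix.toEuclideanCLM (𝕜 := ℂ) (1 - _) e = _
    rw [map_sub, map_one, sub_apply, one_apply_eq_self]
    exact congrArg (e - ·) he.symm
  rw [hsub]
  exact ContinuousLinearMap.inner_sub_apply_eq_zero_of_norm_le_one hB hf e
end

section
/- Let A = A* be a positive definite n×n matrix. Then there exist δ > 0 and c > 0 such that for any matrix Ã with ‖A − Ã‖ < δ and any vectors x, y ∈ ℂⁿ with ⟨Ã x, y⟩ = 0, one has ‖x − y‖² ≥ c(‖x‖² + ‖y‖²). -/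
open scoped Matrix.Norms.L2Operator ComplexOrder InnerProductSpace

/-!
Positive definiteness gives a coercivity bound `r ‖x‖² ≤ re ⟪A x, x⟫` with `r > 0`, and the bound
survives, with constant `r / 2`, for every `Ã` with `‖A - Ã‖ < r / 2`. If `⟪Ã x, y⟫ = 0`, then
`re ⟪Ã x, x⟫ = re ⟪Ã x, x - y⟫`, so `(r / 2) ‖x‖² ≤ ‖Ã‖ ‖x‖ ‖x - y‖`: thus `‖x‖` is controlled by
`‖x - y‖`, and then so is `‖y‖ ≤ ‖x‖ + ‖x - y‖`.
-/

section InnerProductSpace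

variable {𝕜 E : Type*} [RCLike 𝕜] [NormedAddCommGroup E] [InnerProductSpace 𝕜 E]

theorem ContinuousLinearMap.sub_opNorm_mul_norm_sq_le_re_inner {m : ℝ} {T S : E →L[𝕜] E} {x : E}
    (hT : m * ‖x‖ ^ 2 ≤ RCLike.re ⟪T x, x⟫_𝕜) :
    (m - ‖T - S‖) * ‖x‖ ^ 2 ≤ RCLike.re ⟪S x, x⟫_𝕜 := by
  have hTS : RCLike.re ⟪(T - S) x, x⟫_𝕜 ≤ ‖T - S‖ * ‖x‖ ^ 2 :=
    calc RCLike.re ⟪(T - S) x, x⟫_𝕜 ≤ ‖(T - S) x‖ * ‖x‖ := re_inner_le_norm _ _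
      _ ≤ ‖T - S‖ * ‖x‖ * ‖x‖ := by gcongr; exact (T - S).le_opNorm x
      _ = ‖T - S‖ * ‖x‖ ^ 2 := by ring
  rw [sub_apply, inner_sub_left, map_sub] at hTS
  linarith

theorem ContinuousLinearMap.mul_norm_le_opNorm_mul_norm_sub {m : ℝ} {T : E →L[𝕜] E} {x y : E}
    (hT : m * ‖x‖ ^ 2 ≤ RCLike.re ⟪T x, x⟫_𝕜) (hxy : ⟪T x, y⟫_𝕜 = 0) :
    m * ‖x‖ ≤ ‖T‖ * ‖x - y‖ := by
  have key : m * ‖x‖ * ‖x‖ ≤ ‖T‖ * ‖x - y‖ * ‖x‖ :=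
    calc m * ‖x‖ * ‖x‖ = m * ‖x‖ ^ 2 := by ring
      _ ≤ RCLike.re ⟪T x, x - y⟫_𝕜 := by rwa [inner_sub_right, hxy, sub_zero]
      _ ≤ ‖T x‖ * ‖x - y‖ := re_inner_le_norm _ _
      _ ≤ ‖T‖ * ‖x‖ * ‖x - y‖ := by gcongr; exact T.le_opNorm x
      _ = ‖T‖ * ‖x - y‖ * ‖x‖ := by ring
  rcases (norm_nonneg x).eq_or_lt with hx | hx
  · rw [← hx, mul_zero]; positivity
  · exact le_of_mul_le_mul_right key hx

end InnerProductSpace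

theorem norm_sq_add_norm_sq_le_of_norm_le {E : Type*} [SeminormedAddCommGroup E] {C : ℝ}
    {x y : E} (hx : ‖x‖ ≤ C * ‖x - y‖) :
    ‖x‖ ^ 2 + ‖y‖ ^ 2 ≤ (C ^ 2 + (C + 1) ^ 2) * ‖x - y‖ ^ 2 := by
  have hy : ‖y‖ ≤ (C + 1) * ‖x - y‖ :=
    calc ‖y‖ ≤ ‖x‖ + ‖x - y‖ := norm_le_norm_add_norm_sub x y
      _ ≤ (C + 1) * ‖x - y‖ := by linarith
  have hx' := pow_le_pow_left₀ (norm_nonneg x) hx 2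
  have hy' := pow_le_pow_left₀ (norm_nonneg y) hy 2
  nlinarith

open scoped MatrixOrder in
theorem Matrix.PosDef.exists_pos_mul_norm_sq_le_re_inner {n : Type*} [Fintype n] [DecidableEq n]
    {A : Matrix n n ℂ} (hA : A.PosDef) :
    ∃ r > (0 : ℝ), ∀ x : EuclideanSpace ℂ n,
      r * ‖x‖ ^ 2 ≤ RCLike.re ⟪Matrix.toEuclideanLin A x, x⟫_ℂ := by
  obtain ⟨r, hr, hrA⟩ : ∃ r > (0 : ℝ), algebraMap ℝ (Matrix n n ℂ) r ≤ A := by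
    rcases isEmpty_or_nonempty n with h | h
    -- the spectral criterion needs a nontrivial matrix algebra
    · exact ⟨1, one_pos, le_of_eq (Subsingleton.elim _ _)⟩
    exact (CFC.exists_pos_algebraMap_le_iff hA.isHermitian.isSelfAdjoint).2
      fun _ hx => hA.isStrictlyPositive.spectrum_pos hx
  refine ⟨r, hr, fun x => ?_⟩
  have := (Matrix.isPositive_toEuclideanLin_iff.2 (Matrix.le_iff.1 hrA)).re_inner_nonneg_left x
  simp only [map_sub, LinearMap.sub_apply, inner_sub_left] at this
  rw [IsScalarTower.algebraMap_apply ℝ ℂ, Algebra.algebraMap_eq_smul_one, map_smul] at this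
  simpa [inner_smul_left, ← Complex.ofReal_pow] using this

theorem dist_lower_bound_near_posdef {n : ℕ}
    (A : Matrix (Fin n) (Fin n) ℂ) (hA : A.PosDef) :
    ∃ δ > (0 : ℝ), ∃ c > (0 : ℝ),
      ∀ Atil : Matrix (Fin n) (Fin n) ℂ, ‖A - Atil‖ < δ →
        ∀ x y : EuclideanSpace ℂ (Fin n),
          inner ℂ (Matrix.toEuclideanLin Atil x) y = (0 : ℂ) →
          ‖x - y‖ ^ 2 ≥ c * (‖x‖ ^ 2 + ‖y‖ ^ 2) := by
  obtain ⟨r, hr, hAr⟩ := hA.exists_pos_mul_norm_sq_le_re_inner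
  set C := (‖A‖ + r) / (r / 2)
  refine ⟨r / 2, half_pos hr, (C ^ 2 + (C + 1) ^ 2)⁻¹, by positivity, fun Atil hδ x y hxy => ?_⟩
  let T := Matrix.toEuclideanCLM (n := Fin n) (𝕜 := ℂ)
  have hdist : ‖T A - T Atil‖ < r / 2 := by
    rwa [← map_sub, Matrix.l2_opNorm_toEuclideanCLM]
  have hnorm : ‖T Atil‖ ≤ ‖A‖ + r := by
    rw [Matrix.l2_opNorm_toEuclideanCLM]
    linarith [norm_le_norm_add_norm_sub A Atil]
  have hcoer : r / 2 * ‖x‖ ^ 2 ≤ RCLike.re ⟪T Atil x, x⟫_ℂ :=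
    le_trans (by gcongr; linarith) ((T A).sub_opNorm_mul_norm_sq_le_re_inner (S := T Atil) (hAr x))
  have hx : ‖x‖ ≤ C * ‖x - y‖ := by
    rw [div_mul_eq_mul_div, le_div_iff₀ (half_pos hr), mul_comm]
    exact ((T Atil).mul_norm_le_opNorm_mul_norm_sub hcoer hxy).trans (by gcongr)
  rw [ge_iff_le, inv_mul_le_iff₀ (by positivity)]
  exact norm_sq_add_norm_sq_le_of_norm_le hx
end

section
/- Fix λ on the unit circle and a contractive analytic matrix function b on the disc. The set of vectors x ∈ ℂⁿ such that limsup over nontangential approach z → λ of (‖x‖² − ‖b(z)*x‖²)/(1 − |z|²) is finite, is a linear subspace of ℂⁿ. -/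
open scoped Matrix.Norms.L2Operator Matrix

/-- The Stolz region `Γ_t(λ) = {z ∈ 𝔻 : |z − λ| < t(1 − |z|)}`. -/
def stolzRegion (t : ℝ) (lam : ℂ) : Set ℂ :=
  {z : ℂ | ‖z‖ < 1 ∧ ‖z - lam‖ < t * (1 - ‖z‖)}

/-!
For a contraction `T` between inner product spaces the defect `‖x‖² - ‖T x‖²` is nonnegative,
and by the parallelogram law `defect (x + y) + defect (x - y) = 2 (defect x + defect y)`; hence
`defect (x + y) ≤ 2 (defect x + defect y)`, while `defect (c • x) = ‖c‖² defect x`. Both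
inequalities survive division by the nonnegative weight `1 - |z|²`, so bounded-above weighted
defects form a subspace, whatever the filter along which `z` moves.
-/

open Filter

lemma Filter.IsBoundedUnder.const_mul_of_nonneg {ι α : Type*} [Preorder α] [Mul α] [Zero α]
    [PosMulMono α] {l : Filter ι} {u : ι → α} {c : α} (hc : 0 ≤ c)
    (hu : IsBoundedUnder (· ≤ ·) l u) : IsBoundedUnder (· ≤ ·) l fun i => c * u i := by
  obtain ⟨U, hU⟩ := hu.eventually_le
  exact isBoundedUnder_of_eventually_le (a := c * U) <|
    hU.mono fun _ h => mul_le_mul_of_nonneg_left h hc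

lemma LinearMap.defect_smul {𝕜 E F : Type*} [NormedField 𝕜] [SeminormedAddCommGroup E]
    [NormedSpace 𝕜 E] [SeminormedAddCommGroup F] [NormedSpace 𝕜 F] (T : E →ₗ[𝕜] F)
    (c : 𝕜) (x : E) :
    ‖c • x‖ ^ 2 - ‖T (c • x)‖ ^ 2 = ‖c‖ ^ 2 * (‖x‖ ^ 2 - ‖T x‖ ^ 2) := by
  rw [map_smul, norm_smul, norm_smul]
  ring

section InnerProductSpace

variable {𝕜 E F : Type*} [RCLike 𝕜] [NormedAddCommGroup E] [InnerProductSpace 𝕜 E]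
  [NormedAddCommGroup F] [InnerProductSpace 𝕜 F]

lemma LinearMap.defect_add_add_defect_sub (T : E →ₗ[𝕜] F) (x y : E) :
    (‖x + y‖ ^ 2 - ‖T (x + y)‖ ^ 2) + (‖x - y‖ ^ 2 - ‖T (x - y)‖ ^ 2) =
      2 * ((‖x‖ ^ 2 - ‖T x‖ ^ 2) + (‖y‖ ^ 2 - ‖T y‖ ^ 2)) := by
  rw [map_add, map_sub]
  linarith [parallelogram_law_with_norm 𝕜 x y, parallelogram_law_with_norm 𝕜 (T x) (T y)]

lemma LinearMap.defect_add_le (T : E →ₗ[𝕜] F) (hT : ∀ v, ‖T v‖ ≤ ‖v‖) (x y : E) :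
    ‖x + y‖ ^ 2 - ‖T (x + y)‖ ^ 2 ≤ 2 * ((‖x‖ ^ 2 - ‖T x‖ ^ 2) + (‖y‖ ^ 2 - ‖T y‖ ^ 2)) := by
  have hsub : 0 ≤ ‖x - y‖ ^ 2 - ‖T (x - y)‖ ^ 2 :=
    sub_nonneg.2 (pow_le_pow_left₀ (norm_nonneg _) (hT _) 2)
  linarith [T.defect_add_add_defect_sub x y]

def Submodule.ofBoundedWeightedDefect {ι : Type*} (l : Filter ι) (T : ι → E →ₗ[𝕜] F)
    (w : ι → ℝ) (hT : ∀ᶠ i in l, ∀ v, ‖T i v‖ ≤ ‖v‖) (hw : ∀ᶠ i in l, 0 ≤ w i) :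
    Submodule 𝕜 E where
  carrier := {x | IsBoundedUnder (· ≤ ·) l fun i => (‖x‖ ^ 2 - ‖T i x‖ ^ 2) / w i}
  zero_mem' := by simpa using isBoundedUnder_const
  add_mem' {x y} hx hy := by
    refine ((isBoundedUnder_le_add hx hy).const_mul_of_nonneg zero_le_two).mono_le ?_
    filter_upwards [hT, hw] with i hTi hwi
    rw [Pi.add_apply, ← add_div, ← mul_div_assoc]
    exact div_le_div_of_nonneg_right ((T i).defect_add_le hTi x y) hwi
  smul_mem' c x hx := by
    simpa only [Set.mem_ofPred_eq, LinearMap.defect_smul, mul_div_assoc] using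
      hx.const_mul_of_nonneg (sq_nonneg ‖c‖)

end InnerProductSpace

lemma Matrix.norm_toEuclideanLin_conjTranspose_apply_le {𝕜 m n : Type*} [RCLike 𝕜]
    [Fintype m] [Fintype n] [DecidableEq m] [DecidableEq n] (A : Matrix m n 𝕜) (hA : ‖A‖ ≤ 1)
    (x : EuclideanSpace 𝕜 m) : ‖toEuclideanLin Aᴴ x‖ ≤ ‖x‖ :=
  calc ‖toEuclideanLin Aᴴ x‖ ≤ ‖Aᴴ‖ * ‖x‖ := Aᴴ.l2_opNorm_mulVec x
    _ ≤ ‖x‖ := by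
      rw [l2_opNorm_conjTranspose]
      exact mul_le_of_le_one_left (norm_nonneg x) hA

theorem caratheodory_codirections_subspace_general {n : ℕ}
    (b : ℂ → Matrix (Fin n) (Fin n) ℂ)
    (hb : ∀ z ∈ Metric.ball (0 : ℂ) 1, ‖b z‖ ≤ 1)
    (lam : ℂ) (t : ℝ) :
    ∃ E : Submodule ℂ (EuclideanSpace ℂ (Fin n)),
      (E : Set (EuclideanSpace ℂ (Fin n))) =
        {x : EuclideanSpace ℂ (Fin n) |
          Filter.IsBoundedUnder (· ≤ ·) (nhdsWithin lam (stolzRegion t lam))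
            (fun z : ℂ =>
              (‖x‖ ^ 2 - ‖Matrix.toEuclideanLin (b z)ᴴ x‖ ^ 2) / (1 - ‖z‖ ^ 2))} := by
  have hdisc : ∀ᶠ z in nhdsWithin lam (stolzRegion t lam), ‖z‖ < 1 :=
    eventually_nhdsWithin_of_forall fun _ hz => hz.1
  have hT := hdisc.mono fun z hz =>
    (b z).norm_toEuclideanLin_conjTranspose_apply_le (hb z (mem_ball_zero_iff.2 hz))
  have hw : ∀ᶠ z in nhdsWithin lam (stolzRegion t lam), 0 ≤ 1 - ‖z‖ ^ 2 :=
    hdisc.mono fun z hz => sub_nonneg.2 (pow_le_one₀ (norm_nonneg z) hz.le)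
  exact ⟨Submodule.ofBoundedWeightedDefect _ _ _ hT hw, rfl⟩

theorem caratheodory_codirections_subspace {n : ℕ}
    (b : ℂ → Matrix (Fin n) (Fin n) ℂ)
    (hb : ∀ z ∈ Metric.ball (0 : ℂ) 1, ‖b z‖ ≤ 1)
    (lam : ℂ) (hlam : ‖lam‖ = 1) (t : ℝ) (ht : 1 < t) :
    ∃ E : Submodule ℂ (EuclideanSpace ℂ (Fin n)),
      (E : Set (EuclideanSpace ℂ (Fin n))) =
        {x : EuclideanSpace ℂ (Fin n) |
          Filter.IsBoundedUnder (· ≤ ·) (nhdsWithin lam (stolzRegion t lam))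
            (fun z : ℂ =>
              (‖x‖ ^ 2 - ‖Matrix.toEuclideanLin (b z)ᴴ x‖ ^ 2) / (1 - ‖z‖ ^ 2))} :=
  caratheodory_codirections_subspace_general b hb lam t
end

section
/- If f is a bounded analytic function on the sector S_γ = {z ∈ ℂ : z ≠ 0, |z| < 1, |arg z| < γ} with 0 < γ ≤ π, and the radial limit lim_{x→0⁺} f(x) = a exists, then for every 0 < β < γ the limit of f(z) as z → 0 with z ∈ S_β equals a. -/
/-- The sector `S_γ = {z ∈ ℂ : z ≠ 0, |z| < 1, |arg z| < γ}`. -/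
def sector (γ : ℝ) : Set ℂ :=
  {z : ℂ | z ≠ 0 ∧ ‖z‖ < 1 ∧ |Complex.arg z| < γ}

/-!
Composing with `exp` turns the sector into the half-strip `{Re w < 0, |Im w| < γ}`, the radial
limit into a limit along the real axis as `Re w → -∞`, and the limit in `S_β` into a limit as
`Re w → -∞` with `|Im w| ≤ β`. The horizontal translates `w ↦ h (s + w)`, `s ≤ -γ`, of the bounded
holomorphic `h = f ∘ exp` are uniformly bounded on the disc of radius `γ`, hence equicontinuous
there by the Cauchy estimates. A pointwise limit of them along an ultrafilter finer than
`s → -∞` is therefore a locally uniform limit, so it is holomorphic; it equals `a` on the real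
diameter, hence everywhere by the identity theorem. So the translates tend to `a` uniformly on the
closed disc of radius `β`, which contains `i Im w` for every `w` in question.
-/

open Complex Filter Metric Set Topology

theorem EquicontinuousOn.tendstoLocallyUniformlyOn_of_tendsto {X α ι : Type*} [TopologicalSpace X]
    [LocallyCompactSpace X] [UniformSpace α] {F : ι → X → α} {f : X → α} {V : Set X}
    {l : Filter ι} (hF : EquicontinuousOn F V) (hV : IsOpen V)
    (h : ∀ x ∈ V, Tendsto (F · x) l (𝓝 (f x))) : TendstoLocallyUniformlyOn F f l V := by
  refine (tendstoLocallyUniformlyOn_iff_forall_isCompact hV).2 fun K hKV hK => ?_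
  have : CompactSpace K := isCompact_iff_compactSpace.mp hK
  rw [tendstoUniformlyOn_iff_tendstoUniformly_comp_coe]
  have hequi : Equicontinuous (K.domRestrict ∘ F) := (equicontinuous_restrict_iff F).2 (hF.mono hKV)
  exact UniformFun.tendsto_iff_tendstoUniformly.1 <| (hequi.tendsto_uniformFun_iff_pi l _).2
    (tendsto_pi_nhds.2 fun x => h x (hKV x.2))

section

variable {E : Type*} [NormedAddCommGroup E] [NormedSpace ℂ E]

theorem Convex.norm_image_sub_le_of_bounded_on_cthickening {f : ℂ → E} {U K : Set ℂ} {r M : ℝ}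
    (hK : Convex ℝ K) (hr : 0 < r) (hKU : Metric.cthickening r K ⊆ U)
    (hf : DifferentiableOn ℂ f U) (hM : ∀ z ∈ U, ‖f z‖ ≤ M) {x y : ℂ} (hx : x ∈ K) (hy : y ∈ K) :
    ‖f y - f x‖ ≤ M / r * ‖y - x‖ := by
  have hball : ∀ u ∈ K, closedBall u r ⊆ U := fun u hu =>
    (closedBall_subset_cthickening hu r).trans hKU
  refine hK.norm_image_sub_le_of_norm_deriv_le (fun u hu => ?_) (fun u hu => ?_) hx hy
  · exact hf.differentiableAt (mem_of_superset (closedBall_mem_nhds u hr) (hball u hu))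
  · exact norm_deriv_le_of_forall_mem_sphere_norm_le hr (hf.diffContOnCl_ball (hball u hu))
      fun z hz => hM z (hball u hu (sphere_subset_closedBall hz))

theorem equicontinuousOn_of_differentiableOn_of_norm_le {ι : Type*} {F : ι → ℂ → E} {V : Set ℂ}
    {M : ℝ} (hV : IsOpen V) (hF : ∀ i, DifferentiableOn ℂ (F i) V)
    (hM : ∀ i, ∀ z ∈ V, ‖F i z‖ ≤ M) : EquicontinuousOn F V := by
  intro z hz
  obtain ⟨ε, hε, hεV⟩ := Metric.isOpen_iff.1 hV z hz
  have hr : 0 < ε / 3 := by positivity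
  have hcth : cthickening (ε / 3) (ball z (ε / 3)) ⊆ V := by
    rw [cthickening_ball hr.le hr]
    exact (closedBall_subset_ball (by linarith)).trans hεV
  refine (Metric.equicontinuousAt_of_continuity_modulus (fun x => M / (ε / 3) * ‖x - z‖)
    ?_ F ?_).equicontinuousWithinAt V
  · simpa using
      ((continuous_id.sub (continuous_const (y := z))).norm.const_mul (M / (ε / 3))).tendsto z
  · filter_upwards [ball_mem_nhds z hr] with x hx i
    rw [dist_eq_norm, ← norm_neg, neg_sub]
    exact Convex.norm_image_sub_le_of_bounded_on_cthickening (convex_ball z _) hr hcth (hF i)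
      (hM i) (mem_ball_self hr) hx

theorem eqOn_const_of_tendsto_of_frequently_tendsto [CompleteSpace E] {ι : Type*}
    {l : Filter ι} [l.NeBot] {F : ι → ℂ → E} {G : ℂ → E} {V : Set ℂ} {z₀ : ℂ} {a : E}
    (hV : IsOpen V) (hV' : IsPreconnected V) (hF : ∀ i, DifferentiableOn ℂ (F i) V)
    (hequi : EquicontinuousOn F V) (hG : ∀ z ∈ V, Tendsto (F · z) l (𝓝 (G z))) (hz₀ : z₀ ∈ V)
    (ha : ∃ᶠ z in 𝓝[≠] z₀, Tendsto (F · z) l (𝓝 a)) : EqOn G (fun _ => a) V := by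
  have hGd : DifferentiableOn ℂ G V :=
    (hequi.tendstoLocallyUniformlyOn_of_tendsto hV hG).differentiableOn (.of_forall hF) hV
  refine (hGd.analyticOnNhd hV).eqOn_of_preconnected_of_frequently_eq analyticOnNhd_const hV'
    hz₀ ?_
  have hV₀ : ∀ᶠ z in 𝓝[≠] z₀, z ∈ V := mem_nhdsWithin_of_mem_nhds (hV.mem_nhds hz₀)
  exact (ha.and_eventually hV₀).mono fun z ⟨hza, hzV⟩ => tendsto_nhds_unique (hG z hzV) hza

theorem tendstoLocallyUniformlyOn_const_of_frequently_tendsto [ProperSpace E] {ι : Type*}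
    {l : Filter ι} {F : ι → ℂ → E} {V : Set ℂ} {M : ℝ} {z₀ : ℂ} {a : E}
    (hV : IsOpen V) (hV' : IsPreconnected V) (hF : ∀ i, DifferentiableOn ℂ (F i) V)
    (hM : ∀ i, ∀ z ∈ V, ‖F i z‖ ≤ M) (hz₀ : z₀ ∈ V)
    (ha : ∃ᶠ z in 𝓝[≠] z₀, Tendsto (F · z) l (𝓝 a)) :
    TendstoLocallyUniformlyOn F (fun _ => a) l V := by
  have hequi := equicontinuousOn_of_differentiableOn_of_norm_le hV hF hM
  have hball : IsCompact (closedBall (0 : E) M) := isCompact_closedBall 0 M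
  have hmem : ∀ z ∈ V, ∀ i, F i z ∈ closedBall (0 : E) M := fun z hz i =>
    mem_closedBall_zero_iff.2 (hM i z hz)
  refine hequi.tendstoLocallyUniformlyOn_of_tendsto hV fun z hz => ?_
  refine hball.tendsto_nhds_of_unique_mapClusterPt (.of_forall (hmem z hz)) fun b _ hb => ?_
  obtain ⟨U, hUl, hUb⟩ := mapClusterPt_iff_ultrafilter.1 hb
  have hlim : ∀ w ∈ V, ∃ c, Tendsto (F · w) U (𝓝 c) := fun w hw =>
    (hball.ultrafilter_le_nhds' (U.map (F · w)) (Ultrafilter.mem_map.2 (univ_mem' (hmem w hw)))).imp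
      fun _ hc => hc.2
  choose! G hG using hlim
  rw [tendsto_nhds_unique hUb (hG z hz)]
  exact eqOn_const_of_tendsto_of_frequently_tendsto hV hV' hF hequi hG hz₀
    (ha.mono fun w hw => hw.mono_left hUl) hz

theorem tendsto_comap_re_atBot_of_bounded_on_halfStrip [ProperSpace E] {h : ℂ → E}
    {β γ M : ℝ} {a : E} (hγ : 0 < γ) (hβγ : β < γ)
    (hd : DifferentiableOn ℂ h (Iio 0 ×ℂ Ioo (-γ) γ)) (hM : ∀ w ∈ Iio 0 ×ℂ Ioo (-γ) γ, ‖h w‖ ≤ M)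
    (ha : Tendsto (fun x : ℝ => h x) atBot (𝓝 a)) :
    Tendsto h (comap re atBot ⊓ 𝓟 (im ⁻¹' Icc (-β) β)) (𝓝 a) := by
  set F : Iic (-γ) → ℂ → E := fun s w => h (s + w)
  have hmaps (s : Iic (-γ)) : MapsTo ((s : ℂ) + ·) (ball 0 γ) (Iio 0 ×ℂ Ioo (-γ) γ) := by
    intro w hw
    rw [mem_ball_zero_iff] at hw
    have hre := (abs_le.1 (abs_re_le_norm w)).2
    have him := abs_lt.1 ((abs_im_le_norm w).trans_lt hw)
    have hs : (s : ℝ) ≤ -γ := s.2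
    simp only [mem_reProdIm, add_re, ofReal_re, add_im, ofReal_im, zero_add, mem_Iio, mem_Ioo]
    exact ⟨by linarith, him⟩
  have hreal (x : ℝ) : Tendsto (F · (x : ℂ)) atBot (𝓝 a) := by
    refine (tendsto_comp_val_Iic_atBot (f := fun t : ℝ => h (t + x))).2 ?_
    simpa only [Function.comp_def, id, ofReal_add] using
      ha.comp (tendsto_atBot_add_const_right _ x tendsto_id)
  have hofReal : Tendsto ((↑) : ℝ → ℂ) (𝓝[≠] 0) (𝓝[≠] 0) :=
    tendsto_nhdsWithin_iff.2 ⟨(continuous_ofReal.tendsto' 0 0 ofReal_zero).mono_left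
      nhdsWithin_le_nhds, eventually_nhdsWithin_of_forall fun x hx => ofReal_ne_zero.2 hx⟩
  have hunif : TendstoLocallyUniformlyOn F (fun _ => a) atBot (ball 0 γ) :=
    tendstoLocallyUniformlyOn_const_of_frequently_tendsto isOpen_ball
      (convex_ball 0 γ).isPreconnected (fun s => hd.comp (differentiableOn_id.const_add _)
      (hmaps s)) (fun s w hw => hM _ (hmaps s hw)) (mem_ball_self hγ)
      (hofReal.frequently (Eventually.of_forall hreal).frequently)
  have hK := (tendstoLocallyUniformlyOn_iff_forall_isCompact isOpen_ball).1 hunif _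
    (closedBall_subset_ball hβγ) (isCompact_closedBall 0 β)
  refine Metric.tendsto_nhds.2 fun ε hε => ?_
  obtain ⟨s₀, hs₀⟩ := eventually_atBot.1 (Metric.tendstoUniformlyOn_iff.1 hK ε hε)
  refine mem_inf_of_inter (preimage_mem_comap (Iic_mem_atBot (s₀ : ℝ))) (mem_principal_self _) ?_
  rintro w ⟨hw : w.re ≤ s₀, hwβ : w.im ∈ Icc (-β) β⟩
  have hwK : (w.im * I : ℂ) ∈ closedBall 0 β := by simpa [abs_le] using hwβ
  simpa only [mem_ofPred_eq, dist_comm, F, re_add_im] using hs₀ ⟨w.re, hw.trans s₀.2⟩ hw _ hwK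

end

theorem exp_mem_sector {γ : ℝ} (hγπ : γ ≤ Real.pi) {w : ℂ} (hw : w ∈ Iio 0 ×ℂ Ioo (-γ) γ) :
    exp w ∈ sector γ := by
  obtain ⟨hre, him⟩ := hw
  refine ⟨exp_ne_zero w, ?_, ?_⟩
  · rw [norm_exp]
    exact Real.exp_lt_one_iff.2 hre
  · rw [← log_im, log_exp (by linarith [him.1]) (by linarith [him.2]), abs_lt]
    exact him

theorem tendsto_log_nhdsWithin_sector (β : ℝ) :
    Tendsto log (𝓝[sector β] 0) (comap re atBot ⊓ 𝓟 (im ⁻¹' Icc (-β) β)) := by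
  refine tendsto_inf.2 ⟨tendsto_comap_iff.2 ?_, tendsto_principal.2 ?_⟩
  · have hne : 𝓝[sector β] (0 : ℂ) ≤ 𝓝[≠] 0 := nhdsWithin_mono _ fun z hz => hz.1
    simpa only [Function.comp_def, log_re] using
      Real.tendsto_log_nhdsGT_zero.comp (tendsto_norm_nhdsNE_zero.mono_left hne)
  · filter_upwards [self_mem_nhdsWithin] with z hz
    rw [mem_preimage, log_im]
    exact abs_le.1 hz.2.2.le

theorem nontangential_limit_of_radial_limit_general
    (f : ℂ → ℂ) (γ : ℝ) (hγπ : γ ≤ Real.pi)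
    (hf : DifferentiableOn ℂ f (sector γ))
    (hbdd : ∃ M : ℝ, ∀ z ∈ sector γ, ‖f z‖ ≤ M)
    (a : ℂ)
    (hrad : Filter.Tendsto (fun x : ℝ => f (x : ℂ)) (nhdsWithin 0 (Set.Ioi 0)) (nhds a)) :
    ∀ β : ℝ, 0 < β → β < γ →
      Filter.Tendsto f (nhdsWithin 0 (sector β)) (nhds a) := by
  intro β hβ0 hβγ
  obtain ⟨M, hM⟩ := hbdd
  have hexp : MapsTo exp (Iio 0 ×ℂ Ioo (-γ) γ) (sector γ) := fun w hw => exp_mem_sector hγπ hw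
  have hradial : Tendsto (fun x : ℝ => f (exp x)) atBot (𝓝 a) := by
    simpa only [Function.comp_def, ofReal_exp] using hrad.comp Real.tendsto_exp_atBot_nhdsGT
  have hstrip : Tendsto (f ∘ exp) (comap re atBot ⊓ 𝓟 (im ⁻¹' Icc (-β) β)) (𝓝 a) :=
    tendsto_comap_re_atBot_of_bounded_on_halfStrip (hβ0.trans hβγ) hβγ
      (hf.comp differentiable_exp.differentiableOn hexp) (fun w hw => hM _ (hexp hw)) hradial
  refine (hstrip.comp (tendsto_log_nhdsWithin_sector β)).congr' ?_
  filter_upwards [self_mem_nhdsWithin] with z hz using congrArg f (exp_log hz.1)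

theorem nontangential_limit_of_radial_limit
    (f : ℂ → ℂ) (γ : ℝ) (hγ0 : 0 < γ) (hγπ : γ ≤ Real.pi)
    (hf : DifferentiableOn ℂ f (sector γ))
    (hbdd : ∃ M : ℝ, ∀ z ∈ sector γ, ‖f z‖ ≤ M)
    (a : ℂ)
    (hrad : Filter.Tendsto (fun x : ℝ => f (x : ℂ)) (nhdsWithin 0 (Set.Ioi 0)) (nhds a)) :
    ∀ β : ℝ, 0 < β → β < γ →
      Filter.Tendsto f (nhdsWithin 0 (sector β)) (nhds a) :=
  nontangential_limit_of_radial_limit_general f γ hγπ hf hbdd a hrad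
end
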